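/- Let f(z) = ∑ a_n z^n be analytic on the unit disc with (a_n) a decreasing sequence of nonnegative real numbers. If f belongs to the Bloch space (sup_{z∈D}(1-|z|²)|f'(z)| < ∞), then a_n = O(1/n). -/

import Mathlib

open MeasureTheory Set Metric Complex

/-! Evaluate the Bloch bound at `r = 1 - 1/(2n)`. Since the coefficients decrease,
`f'(r) = ∑ k a_k r^(k-1) ≥ a_n r^n ∑_{k ≤ n} k ≥ n² a_n / 4`, because `r^n ≥ 1/2` by Bernoulli's
inequality, while `1 - r² ≥ 1 - r = 1/(2n)`; hence `n a_n / 8` is bounded by the Bloch constant. -/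

theorem summable_natCast_mul_pow_sub_one {r : ℝ} (hr0 : 0 ≤ r) (hr1 : r < 1) :
    Summable fun n : ℕ => (n : ℝ) * r ^ (n - 1) := by
  refine (summable_nat_add_iff 1).1 ?_
  have h := (summable_pow_mul_geometric_of_norm_lt_one 1 (by rwa [Real.norm_of_nonneg hr0])).add
    (summable_geometric_of_lt_one hr0 hr1)
  refine h.congr fun n => ?_
  simp only [pow_one, Nat.add_sub_cancel, Nat.cast_add, Nat.cast_one]
  ring

theorem summable_mul_natCast_mul_pow_sub_one {a : ℕ → ℝ} {M : ℝ} (hnn : ∀ n, 0 ≤ a n)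
    (hM : ∀ n, a n ≤ M) {r : ℝ} (hr0 : 0 ≤ r) (hr1 : r < 1) :
    Summable fun n => a n * (n * r ^ (n - 1)) :=
  ((summable_natCast_mul_pow_sub_one hr0 hr1).mul_left M).of_nonneg_of_le
    (fun n => mul_nonneg (hnn n) (by positivity)) fun n =>
      mul_le_mul_of_nonneg_right (hM n) (by positivity)

theorem hasDerivAt_tsum_mul_pow {𝕜 : Type*} [RCLike 𝕜]
    {c : ℕ → 𝕜} {M : ℝ} (hc : ∀ n, ‖c n‖ ≤ M) {z : 𝕜} (hz : ‖z‖ < 1) :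
    HasDerivAt (fun w => ∑' n, c n * w ^ n) (∑' n, c n * (n * z ^ (n - 1))) z := by
  obtain ⟨ρ, hzρ, hρ1⟩ := exists_between hz
  have hρ0 : 0 < ρ := (norm_nonneg z).trans_lt hzρ
  have hM : 0 ≤ M := (norm_nonneg _).trans (hc 0)
  refine hasDerivAt_tsum_of_isPreconnected
    ((summable_natCast_mul_pow_sub_one hρ0.le hρ1).mul_left M) isOpen_ball
    (convex_ball 0 ρ).isPreconnected (fun n w _ => (hasDerivAt_pow n w).const_mul (c n))
    (fun n w hw => ?_) (mem_ball_self hρ0) ?_ (mem_ball_zero_iff.2 hzρ)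
  · rw [mem_ball_zero_iff] at hw
    rw [norm_mul, norm_mul, norm_pow, RCLike.norm_natCast]
    gcongr
    exact hc n
  · exact summable_of_ne_finset_zero (s := {0}) fun n hn => by simp_all

open Finset in
theorem natCast_mul_succ_div_two_mul_le_tsum {a : ℕ → ℝ} (ha : Antitone a) (hnn : ∀ n, 0 ≤ a n)
    {r : ℝ} (hr0 : 0 ≤ r) (hr1 : r ≤ 1) (hs : Summable fun k => a k * (k * r ^ (k - 1))) (n : ℕ) :
    n * (n + 1) / 2 * (a n * r ^ n) ≤ ∑' k, a k * (k * r ^ (k - 1)) := by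
  have gauss : ∑ k ∈ range (n + 1), (k : ℝ) = n * (n + 1) / 2 := by
    induction n with
    | zero => simp
    | succ m ih => rw [sum_range_succ, ih]; push_cast; ring
  calc n * (n + 1) / 2 * (a n * r ^ n) = ∑ k ∈ range (n + 1), k * (a n * r ^ n) := by
        rw [← sum_mul, gauss]
    _ ≤ ∑ k ∈ range (n + 1), a k * (k * r ^ (k - 1)) := by
        refine sum_le_sum fun k hk => ?_
        have hkn : k ≤ n := Nat.lt_succ_iff.mp (mem_range.mp hk)
        have : a n * r ^ n ≤ a k * r ^ (k - 1) :=
          mul_le_mul (ha hkn) (pow_le_pow_of_le_one hr0 hr1 (by omega)) (by positivity) (hnn k)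
        nlinarith [(Nat.cast_nonneg k : (0 : ℝ) ≤ k)]
    _ ≤ ∑' k, a k * (k * r ^ (k - 1)) :=
        hs.sum_le_tsum _ fun k _ => mul_nonneg (hnn k) (by positivity)

theorem one_half_le_one_sub_inv_two_mul_pow (n : ℕ) : (1 : ℝ) / 2 ≤ (1 - (2 * n : ℝ)⁻¹) ^ n := by
  rcases n.eq_zero_or_pos with rfl | hn
  · norm_num
  have hn' : (1 : ℝ) ≤ n := by exact_mod_cast hn
  have hb : (-2 : ℝ) ≤ -(2 * n : ℝ)⁻¹ := by
    have : (2 * n : ℝ)⁻¹ ≤ 1 := inv_le_one_of_one_le₀ (by linarith)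
    linarith
  calc (1 : ℝ) / 2 = 1 + n * -(2 * n : ℝ)⁻¹ := by field_simp; norm_num
    _ ≤ (1 - (2 * n : ℝ)⁻¹) ^ n := by rw [sub_eq_add_neg]; exact one_add_mul_le_pow hb n

theorem norm_deriv_tsum_ofReal_mul_pow {a : ℕ → ℝ} {M : ℝ} (hnn : ∀ n, 0 ≤ a n)
    (hM : ∀ n, a n ≤ M) {r : ℝ} (hr0 : 0 ≤ r) (hr1 : r < 1) :
    ‖deriv (fun w : ℂ => ∑' n, (a n : ℂ) * w ^ n) r‖ = ∑' n, a n * (n * r ^ (n - 1)) := by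
  have hc : ∀ n, ‖(a n : ℂ)‖ ≤ M := fun n => by
    rw [norm_real, Real.norm_of_nonneg (hnn n)]; exact hM n
  have hr : ‖(r : ℂ)‖ < 1 := by rwa [norm_real, Real.norm_of_nonneg hr0]
  rw [(hasDerivAt_tsum_mul_pow hc hr).deriv]
  have hreal : ∑' n, (a n : ℂ) * (n * (r : ℂ) ^ (n - 1))
      = ((∑' n, a n * (n * r ^ (n - 1)) : ℝ) : ℂ) := by
    push_cast [ofReal_tsum]; rfl
  rw [hreal, norm_real,
    Real.norm_of_nonneg (tsum_nonneg fun n => mul_nonneg (hnn n) (by positivity))]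

theorem decreasing_coeff_Bloch_general (a : ℕ → ℝ) (hmono : Antitone a) (hnn : ∀ n, 0 ≤ a n)
    (hbloch : ∃ C : ℝ, ∀ z ∈ Metric.ball (0:ℂ) 1,
      (1 - ‖z‖ ^ 2) *
        ‖deriv (fun w : ℂ => ∑' n : ℕ, (a n : ℂ) * w ^ n) z‖ ≤ C) :
    ∃ C : ℝ, ∀ n : ℕ, 1 ≤ n → a n ≤ C / n := by
  obtain ⟨C, hC⟩ := hbloch
  have ha0 : ∀ n, a n ≤ a 0 := fun n => hmono n.zero_le
  refine ⟨8 * C, fun n hn => ?_⟩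
  have hn' : (1 : ℝ) ≤ n := by exact_mod_cast hn
  set r : ℝ := 1 - (2 * n : ℝ)⁻¹
  have hr0 : 0 ≤ r := by
    have : (2 * n : ℝ)⁻¹ ≤ 1 := inv_le_one_of_one_le₀ (by linarith)
    linarith
  have hr1 : r < 1 := by
    have : (0 : ℝ) < (2 * n : ℝ)⁻¹ := by positivity
    linarith
  have hlow := natCast_mul_succ_div_two_mul_le_tsum hmono hnn hr0 hr1.le
    (summable_mul_natCast_mul_pow_sub_one hnn ha0 hr0 hr1) n
  have hrn := one_half_le_one_sub_inv_two_mul_pow n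
  have hgap : (2 * n : ℝ)⁻¹ ≤ 1 - r ^ 2 := by nlinarith
  have hB := hC r (by simpa [abs_of_nonneg hr0] using hr1)
  rw [norm_real, Real.norm_of_nonneg hr0, norm_deriv_tsum_ofReal_mul_pow hnn ha0 hr0 hr1] at hB
  have han := hnn n
  rw [le_div_iff₀ (by positivity)]
  calc a n * n ≤ 8 * ((2 * n : ℝ)⁻¹ * (n * (n + 1) / 2 * (a n * (1 / 2)))) := by
        field_simp; nlinarith
    _ ≤ 8 * ((1 - r ^ 2) * ∑' k, a k * (k * r ^ (k - 1))) := by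
        gcongr 8 * ?_
        exact mul_le_mul hgap (le_trans (by gcongr) hlow) (by positivity) (by nlinarith)
    _ ≤ 8 * C := by linarith

theorem decreasing_coeff_Bloch (a : ℕ → ℝ) (hmono : Antitone a) (hnn : ∀ n, 0 ≤ a n)
    (hsum : ∀ z ∈ Metric.ball (0:ℂ) 1, Summable (fun n : ℕ => (a n : ℂ) * z ^ n))
    (hbloch : ∃ C : ℝ, ∀ z ∈ Metric.ball (0:ℂ) 1,
      (1 - ‖z‖ ^ 2) *
        ‖deriv (fun w : ℂ => ∑' n : ℕ, (a n : ℂ) * w ^ n) z‖ ≤ C) :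
    ∃ C : ℝ, ∀ n : ℕ, 1 ≤ n → a n ≤ C / n :=
  decreasing_coeff_Bloch_general a hmono hnn hbloch
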